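/- arXiv:1305.2036 — 2 statements merged into one kernel-verified Lean document; each statement's English description precedes it below -/
import Mathlib

section
/- (Discrete Datko theorem) If there exists a constant D ≥ 1 such that Σ_{m=n}^∞ ‖A_m^n x‖ ≤ D ‖x‖ for all n ∈ ℕ and x ∈ X, then the system is uniformly exponentially stable. -/
open scoped BigOperators

/-- The evolution operator `A_m^n = A(m) ∘ ⋯ ∘ A(n+1)`, with `A_n^n = 1`. -/
noncomputable def evol {X : Type*} [NormedAddCommGroup X] [NormedSpace ℝ X]
    (A : ℕ → X →L[ℝ] X) (m n : ℕ) : X →L[ℝ] X :=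
  ((List.range (m - n)).map (fun k => A (n + k + 1))).foldl (fun P B => B ∘L P) 1

/-!
Summing `‖A_m^n x‖ = ‖A_m^k A_k^n x‖ ≤ D ‖A_k^n x‖` over `n ≤ k ≤ m` and using the hypothesis
once more gives `(m - n + 1) ‖A_m^n x‖ ≤ D² ‖x‖`. Hence a block of length `ℓ ≥ e D²` contracts
by the factor `e⁻¹`, and composing `⌊(m - n) / ℓ⌋` such blocks with the uniform bound `D` on the
remainder yields `‖A_m^n x‖ ≤ D e · e^{-(m - n)/ℓ} ‖x‖`.
-/

section Evol

variable {X : Type*} [NormedAddCommGroup X] [NormedSpace ℝ X] (A : ℕ → X →L[ℝ] X)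

lemma evol_self (n : ℕ) : evol A n n = 1 := by
  simp [evol]

lemma evol_succ {m n : ℕ} (hnm : n ≤ m) : evol A (m + 1) n = A (m + 1) ∘L evol A m n := by
  unfold evol
  rw [show m + 1 - n = m - n + 1 by omega, List.range_succ, List.map_append, List.foldl_append]
  simp [show n + (m - n) + 1 = m + 1 by omega]

lemma evol_comp {n k m : ℕ} (hnk : n ≤ k) (hkm : k ≤ m) :
    evol A m n = evol A m k ∘L evol A k n := by
  induction m, hkm using Nat.le_induction with
  | base => rw [evol_self, ContinuousLinearMap.one_def, ContinuousLinearMap.id_comp]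
  | succ m hm ih =>
    rw [evol_succ A (hnk.trans hm), evol_succ A hm, ih, ContinuousLinearMap.comp_assoc]

variable {A} {D : ℝ}

lemma norm_evol_apply_le_of_sum_le
    (h : ∀ n x M, n ≤ M → ∑ m ∈ Finset.Icc n M, ‖evol A m n x‖ ≤ D * ‖x‖)
    {n m : ℕ} (hnm : n ≤ m) (x : X) : ‖evol A m n x‖ ≤ D * ‖x‖ :=
  (Finset.single_le_sum (f := fun k => ‖evol A k n x‖) (fun _ _ => norm_nonneg _)
    (Finset.mem_Icc.mpr ⟨hnm, le_rfl⟩)).trans (h n x m hnm)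

lemma length_mul_norm_evol_apply_le_of_sum_le (hD : 0 ≤ D)
    (h : ∀ n x M, n ≤ M → ∑ m ∈ Finset.Icc n M, ‖evol A m n x‖ ≤ D * ‖x‖)
    {n m : ℕ} (hnm : n ≤ m) (x : X) :
    ((m : ℝ) - n + 1) * ‖evol A m n x‖ ≤ D ^ 2 * ‖x‖ := by
  have hcard : ((Finset.Icc n m).card : ℝ) = (m : ℝ) - n + 1 := by
    rw [Nat.card_Icc, Nat.cast_sub (by omega)]
    push_cast
    ring
  have hfactor : ∀ k ∈ Finset.Icc n m, ‖evol A m n x‖ ≤ D * ‖evol A k n x‖ := by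
    intro k hk
    obtain ⟨hnk, hkm⟩ := Finset.mem_Icc.mp hk
    rw [evol_comp A hnk hkm]
    exact norm_evol_apply_le_of_sum_le h hkm _
  calc ((m : ℝ) - n + 1) * ‖evol A m n x‖
      = ∑ _k ∈ Finset.Icc n m, ‖evol A m n x‖ := by rw [Finset.sum_const, nsmul_eq_mul, hcard]
    _ ≤ ∑ k ∈ Finset.Icc n m, D * ‖evol A k n x‖ := Finset.sum_le_sum hfactor
    _ = D * ∑ k ∈ Finset.Icc n m, ‖evol A k n x‖ := (Finset.mul_sum ..).symm
    _ ≤ D * (D * ‖x‖) := mul_le_mul_of_nonneg_left (h n x m hnm) hD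
    _ = D ^ 2 * ‖x‖ := by ring

lemma norm_evol_add_mul_apply_le_pow {ℓ : ℕ} {c : ℝ} (hc : 0 ≤ c)
    (hblock : ∀ n x, ‖evol A (n + ℓ) n x‖ ≤ c * ‖x‖) (q n : ℕ) (x : X) :
    ‖evol A (n + q * ℓ) n x‖ ≤ c ^ q * ‖x‖ := by
  induction q with
  | zero => simp [evol_self]
  | succ q ih =>
    rw [show n + (q + 1) * ℓ = n + q * ℓ + ℓ by ring,
      evol_comp A (Nat.le_add_right n (q * ℓ)) (Nat.le_add_right _ ℓ)]
    calc ‖evol A (n + q * ℓ + ℓ) (n + q * ℓ) (evol A (n + q * ℓ) n x)‖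
        ≤ c * ‖evol A (n + q * ℓ) n x‖ := hblock _ _
      _ ≤ c * (c ^ q * ‖x‖) := mul_le_mul_of_nonneg_left ih hc
      _ = c ^ (q + 1) * ‖x‖ := by ring

lemma norm_evol_apply_le_exp_of_block_contraction (hD : 0 ≤ D)
    (hbound : ∀ n m, n ≤ m → ∀ x, ‖evol A m n x‖ ≤ D * ‖x‖)
    {ℓ : ℕ} (hℓ : 0 < ℓ) (hblock : ∀ n x, ‖evol A (n + ℓ) n x‖ ≤ Real.exp (-1) * ‖x‖)
    {n m : ℕ} (hnm : n ≤ m) (x : X) :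
    ‖evol A m n x‖ ≤ D * Real.exp 1 * Real.exp (-(1 / ℓ) * ((m : ℝ) - n)) * ‖x‖ := by
  set q := (m - n) / ℓ
  have hq_le : q * ℓ ≤ m - n := Nat.div_mul_le_self (m - n) ℓ
  have hq_lt : m - n < q * ℓ + ℓ := Nat.lt_div_mul_add hℓ
  have hqm : n + q * ℓ ≤ m := by omega
  have hq : ((m : ℝ) - n) / ℓ ≤ q + 1 := by
    rw [div_le_iff₀ (by exact_mod_cast hℓ), ← Nat.cast_sub hnm, add_one_mul]
    exact_mod_cast hq_lt.le
  have hexp : Real.exp (-1) ^ q ≤ Real.exp 1 * Real.exp (-(1 / ℓ) * ((m : ℝ) - n)) := by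
    rw [← Real.exp_nat_mul, ← Real.exp_add, Real.exp_le_exp]
    linarith [show -(1 / (ℓ : ℝ)) * ((m : ℝ) - n) = -(((m : ℝ) - n) / ℓ) by ring]
  calc ‖evol A m n x‖
      = ‖evol A m (n + q * ℓ) (evol A (n + q * ℓ) n x)‖ := by
        rw [evol_comp A (Nat.le_add_right n _) hqm, ContinuousLinearMap.comp_apply]
    _ ≤ D * ‖evol A (n + q * ℓ) n x‖ := hbound _ _ hqm _
    _ ≤ D * (Real.exp (-1) ^ q * ‖x‖) :=
        mul_le_mul_of_nonneg_left
          (norm_evol_add_mul_apply_le_pow (Real.exp_pos _).le hblock q n x) hD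
    _ ≤ D * (Real.exp 1 * Real.exp (-(1 / ℓ) * ((m : ℝ) - n)) * ‖x‖) :=
        mul_le_mul_of_nonneg_left (mul_le_mul_of_nonneg_right hexp (norm_nonneg x)) hD
    _ = D * Real.exp 1 * Real.exp (-(1 / ℓ) * ((m : ℝ) - n)) * ‖x‖ := by ring

end Evol

theorem stmt4_general {X : Type*} [NormedAddCommGroup X] [NormedSpace ℝ X]
    (A : ℕ → X →L[ℝ] X) (D : ℝ) (hD : 1 ≤ D)
    (h : ∀ n : ℕ, ∀ x : X, ∀ M : ℕ, n ≤ M →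
      ∑ m ∈ Finset.Icc n M, ‖evol A m n x‖ ≤ D * ‖x‖) :
    ∃ N α : ℝ, 1 ≤ N ∧ 0 < α ∧
      ∀ n m : ℕ, n ≤ m → ∀ x : X,
        ‖evol A m n x‖ ≤ N * Real.exp (-α * ((m : ℝ) - n)) * ‖x‖ := by
  have hD0 : 0 ≤ D := zero_le_one.trans hD
  set ℓ := ⌈Real.exp 1 * D ^ 2⌉₊
  have hℓ : 0 < ℓ := Nat.ceil_pos.mpr (by positivity)
  have hblock : ∀ n x, ‖evol A (n + ℓ) n x‖ ≤ Real.exp (-1) * ‖x‖ := by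
    intro n x
    have hlen := length_mul_norm_evol_apply_le_of_sum_le hD0 h (Nat.le_add_right n ℓ) x
    have hℓ_ge : Real.exp 1 * D ^ 2 ≤ ℓ := Nat.le_ceil _
    push_cast at hlen
    rw [Real.exp_neg, inv_mul_eq_div, le_div_iff₀ (Real.exp_pos 1)]
    nlinarith [norm_nonneg (evol A (n + ℓ) n x), norm_nonneg x, Real.exp_pos 1]
  refine ⟨D * Real.exp 1, 1 / ℓ, ?_, by positivity, fun n m hnm x => ?_⟩
  · nlinarith [Real.add_one_le_exp (1 : ℝ)]
  · exact norm_evol_apply_le_exp_of_block_contraction hD0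
      (fun n m hnm => norm_evol_apply_le_of_sum_le h hnm) hℓ hblock hnm x

theorem stmt4 {X : Type*} [NormedAddCommGroup X] [NormedSpace ℝ X] [CompleteSpace X]
    (A : ℕ → X →L[ℝ] X) (D : ℝ) (hD : 1 ≤ D)
    (h : ∀ n : ℕ, ∀ x : X, ∀ M : ℕ, n ≤ M →
      ∑ m ∈ Finset.Icc n M, ‖evol A m n x‖ ≤ D * ‖x‖) :
    ∃ N α : ℝ, 1 ≤ N ∧ 0 < α ∧
      ∀ n m : ℕ, n ≤ m → ∀ x : X,
        ‖evol A m n x‖ ≤ N * Real.exp (-α * ((m : ℝ) - n)) * ‖x‖ :=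
  stmt4_general A D hD h
end

section
/- The system is exponentially stable if and only if there exist constants D ≥ 1, d > 0 and c ≥ 0 such that Σ_{m=n}^∞ e^{d(m-n)} ‖A_m^n x‖ ≤ D e^{c n} ‖x‖ for all n ∈ ℕ and x ∈ X. -/
/-!
Both directions are statements about the nonnegative sequence `m ↦ ‖A_m^n x‖` alone.
If it decays like `exp (-α (m - n))`, then weighting it by `exp (d (m - n))` with `d < α`
leaves a geometric decay of ratio `exp (d - α)`, whose partial sums are bounded by
`(1 - exp (d - α))⁻¹`. Conversely a single term of a sum of nonnegative terms is bounded by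
the sum, so dividing out the weight `exp (d (m - n))` gives exponential decay at rate `d`.
-/

open scoped BigOperators

open Finset Real

lemma sum_Icc_pow_sub_le_inv_one_sub {r : ℝ} (hr0 : 0 ≤ r) (hr1 : r < 1) (n M : ℕ) :
    ∑ m ∈ Icc n M, r ^ (m - n) ≤ (1 - r)⁻¹ := by
  have hreindex : ∑ m ∈ Icc n M, r ^ (m - n) = ∑ k ∈ Ico 0 (M + 1 - n), r ^ k := by
    rw [← Ico_add_one_right_eq_Icc, sum_Ico_eq_sum_range, range_eq_Ico]
    exact sum_congr rfl fun k _ => by rw [Nat.add_sub_cancel_left]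
  rw [hreindex, inv_eq_one_div, ← pow_zero r]
  exact geom_sum_Ico_le_of_lt_one hr0 hr1

lemma sum_Icc_exp_mul_le_of_le_exp_neg {u : ℕ → ℝ} {K α d : ℝ} {n : ℕ} (hK : 0 ≤ K)
    (hdα : d < α) (hu : ∀ m, n ≤ m → u m ≤ K * exp (-α * ((m : ℝ) - n))) (M : ℕ) :
    ∑ m ∈ Icc n M, exp (d * ((m : ℝ) - n)) * u m ≤ K * (1 - exp (d - α))⁻¹ := by
  have hterm : ∀ m ∈ Icc n M,
      exp (d * ((m : ℝ) - n)) * u m ≤ K * exp (d - α) ^ (m - n) := by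
    intro m hm
    have hnm : n ≤ m := (mem_Icc.mp hm).1
    calc exp (d * ((m : ℝ) - n)) * u m
        ≤ exp (d * ((m : ℝ) - n)) * (K * exp (-α * ((m : ℝ) - n))) :=
          mul_le_mul_of_nonneg_left (hu m hnm) (exp_pos _).le
      _ = K * exp (((m - n : ℕ) : ℝ) * (d - α)) := by
          rw [Nat.cast_sub hnm, mul_left_comm, ← exp_add]
          ring_nf
      _ = K * exp (d - α) ^ (m - n) := by rw [exp_nat_mul]
  calc ∑ m ∈ Icc n M, exp (d * ((m : ℝ) - n)) * u m
      ≤ ∑ m ∈ Icc n M, K * exp (d - α) ^ (m - n) := sum_le_sum hterm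
    _ = K * ∑ m ∈ Icc n M, exp (d - α) ^ (m - n) := (mul_sum _ _ _).symm
    _ ≤ K * (1 - exp (d - α))⁻¹ :=
        mul_le_mul_of_nonneg_left (sum_Icc_pow_sub_le_inv_one_sub (exp_pos _).le
          (Real.exp_lt_one_iff.mpr (sub_neg.mpr hdα)) n M) hK

lemma le_exp_neg_mul_of_sum_Icc_exp_mul_le {u : ℕ → ℝ} {d B : ℝ} {n m : ℕ}
    (hu : ∀ k, 0 ≤ u k) (hnm : n ≤ m)
    (hsum : ∑ k ∈ Icc n m, exp (d * ((k : ℝ) - n)) * u k ≤ B) :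
    u m ≤ B * exp (-d * ((m : ℝ) - n)) := by
  have hm : exp (d * ((m : ℝ) - n)) * u m ≤ B :=
    (single_le_sum (f := fun k : ℕ => exp (d * ((k : ℝ) - n)) * u k)
      (fun k _ => mul_nonneg (exp_pos _).le (hu k)) (mem_Icc.mpr ⟨hnm, le_rfl⟩)).trans hsum
  rw [neg_mul, exp_neg, ← div_eq_mul_inv, le_div_iff₀ (exp_pos _), mul_comm]
  exact hm

theorem stmt12_general {X : Type*} [NormedAddCommGroup X] [NormedSpace ℝ X]
    (A : ℕ → X →L[ℝ] X) :
    (∃ N α β : ℝ, 1 ≤ N ∧ 0 < α ∧ 0 ≤ β ∧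
      ∀ n m : ℕ, n ≤ m → ∀ x : X,
        ‖evol A m n x‖ ≤ N * Real.exp (-α * ((m : ℝ) - n)) * Real.exp (β * n) * ‖x‖) ↔
    (∃ D d c : ℝ, 1 ≤ D ∧ 0 < d ∧ 0 ≤ c ∧
      ∀ n : ℕ, ∀ x : X, ∀ M : ℕ, n ≤ M →
        ∑ m ∈ Finset.Icc n M, Real.exp (d * ((m : ℝ) - n)) * ‖evol A m n x‖
          ≤ D * Real.exp (c * n) * ‖x‖) := by
  constructor
  · rintro ⟨N, α, β, hN, hα, hβ, hdecay⟩
    have hratio : 0 < 1 - exp (α / 2 - α) := sub_pos.mpr (Real.exp_lt_one_iff.mpr (by linarith))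
    refine ⟨N * (1 - exp (α / 2 - α))⁻¹, α / 2, β, ?_, half_pos hα, hβ, fun n x M _ => ?_⟩
    · exact one_le_mul_of_one_le_of_one_le hN
        ((one_le_inv₀ hratio).mpr (sub_le_self _ (exp_pos _).le))
    · refine (sum_Icc_exp_mul_le_of_le_exp_neg (K := N * exp (β * n) * ‖x‖) (by positivity)
        (half_lt_self hα) (fun m hnm => (hdecay n m hnm x).trans_eq (by ring)) M).trans_eq ?_
      ring
  · rintro ⟨D, d, c, hD, hd, hc, hsum⟩
    refine ⟨D, d, c, hD, hd, hc, fun n m hnm x => ?_⟩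
    exact (le_exp_neg_mul_of_sum_Icc_exp_mul_le (fun k => norm_nonneg _) hnm
      (hsum n x m hnm)).trans_eq (by ring)

theorem stmt12 {X : Type*} [NormedAddCommGroup X] [NormedSpace ℝ X] [CompleteSpace X]
    (A : ℕ → X →L[ℝ] X) :
    (∃ N α β : ℝ, 1 ≤ N ∧ 0 < α ∧ 0 ≤ β ∧
      ∀ n m : ℕ, n ≤ m → ∀ x : X,
        ‖evol A m n x‖ ≤ N * Real.exp (-α * ((m : ℝ) - n)) * Real.exp (β * n) * ‖x‖) ↔
    (∃ D d c : ℝ, 1 ≤ D ∧ 0 < d ∧ 0 ≤ c ∧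
      ∀ n : ℕ, ∀ x : X, ∀ M : ℕ, n ≤ M →
        ∑ m ∈ Finset.Icc n M, Real.exp (d * ((m : ℝ) - n)) * ‖evol A m n x‖
          ≤ D * Real.exp (c * n) * ‖x‖) :=
  stmt12_general A
end
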